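/- Let k-step canonical Markov approximation P^{[k]} of a stationary process P be the stationary Markov chain of order k with transition probabilities P^{[k]}(a | a_{−k}^{−1}) = P(a | a_{−k}^{−1}). Then the context tree of P^{[k]} is dominated by that of P: τ_{P^{[k]}} ≼ τ_P, i.e., every node of τ_{P^{[k]}} is a node of τ_P. -/

import Mathlib

open MeasureTheory

/-- The left shift on bi-infinite sequences. -/
def shift {A : Type*} (x : ℤ → A) : ℤ → A := fun i => x (i + 1)

/-- The cylinder set `{x : x₁ … x_{|w|} = w}`. -/
def cylSet {A : Type*} (w : List A) : Set (ℤ → A) :=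
  {x | ∀ j : Fin w.length, x ((j.1 + 1 : ℕ) : ℤ) = w.get j}

/-- The stationary probability `P(w)` of the string `w`. -/
noncomputable def cylP {A : Type*} [MeasurableSpace A] (P : Measure (ℤ → A))
    (w : List A) : ℝ :=
  (P (cylSet w)).toReal

/-- The conditional probability `P(a|w) = P(wa)/P(w)` of the next symbol `a` given a past
ending with the string `w`. -/
noncomputable def condP {A : Type*} [MeasurableSpace A] (P : Measure (ℤ → A))
    (a : A) (w : List A) : ℝ :=
  cylP P (w ++ [a]) / cylP P w

/-- The string `s` satisfies property 2 of the definition of a context: the conditional law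
of the next symbol given any (positive-probability) past ending with `s` equals `P(·|s)`. -/
def IsMemoryless {A : Type*} [MeasurableSpace A] (P : Measure (ℤ → A)) (s : List A) : Prop :=
  ∀ (u : List A) (a : A), 0 < cylP P (u ++ s) → condP P a (u ++ s) = condP P a s

/-- `w` is a node of the context tree `τ_P` of `P` (a suffix of some, possibly infinite,
context): `w` has positive probability and no proper suffix of `w` is memoryless. -/
def IsNode {A : Type*} [MeasurableSpace A] (P : Measure (ℤ → A)) (w : List A) : Prop :=
  0 < cylP P w ∧ ∀ s, s <:+ w → s ≠ w → ¬ IsMemoryless P s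

/-- `s` is a context of `P` (Definition 1): positive probability (or the empty string),
memoryless, and minimal with that property. -/
def IsContext {A : Type*} [MeasurableSpace A] (P : Measure (ℤ → A)) (s : List A) : Prop :=
  (s = [] ∨ 0 < cylP P s) ∧ IsMemoryless P s ∧ ∀ t, t <:+ s → t ≠ s → ¬ IsMemoryless P t

/-- `P` is a stationary ergodic probability measure on `A^ℤ`. -/
def StatErg {A : Type*} [MeasurableSpace A] (P : Measure (ℤ → A)) : Prop :=
  IsProbabilityMeasure P ∧ P.map shift = P ∧ Ergodic shift P

/-- `Ncount x u n` : the number of occurrences of the string `u` in the sample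
`x₁ … x_n`. -/
def Ncount {A : Type*} [DecidableEq A] (x : ℤ → A) (u : List A) (n : ℕ) : ℕ :=
  ((Finset.range (n + 1 - u.length)).filter
    (fun i => ∀ j : Fin u.length, x ((i + j.1 + 1 : ℕ) : ℤ) = u.get j)).card

/-- The empirical transition probability `p̂_n(a|u) = N_n(ua)/N_{n−1}(u)`. -/
noncomputable def phat {A : Type*} [DecidableEq A] (x : ℤ → A) (n : ℕ) (a : A)
    (u : List A) : ℝ :=
  (Ncount x (u ++ [a]) n : ℝ) / (Ncount x u (n - 1) : ℝ)

/-- The event `{d_n(X₁^n, Q) ≤ c log₂ n}` : for every string `w` occurring in the sample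
that is not a node of `τ_Q`, `N_{n−1}(w) · max_a |p̂_n(a|w) − Q(a|w)| ≤ c log₂ n`. -/
def dnLE {A : Type*} [DecidableEq A] [MeasurableSpace A] (Q : Measure (ℤ → A))
    (x : ℤ → A) (n : ℕ) (c : ℝ) : Prop :=
  ∀ w : List A, 0 < Ncount x w (n - 1) → ¬ IsNode Q w →
    ∀ a : A, (Ncount x w (n - 1) : ℝ) * |phat x n a w - condP Q a w| ≤ c * Real.logb 2 n

/-!
A node of `τ_{P^{[k]}}` has length at most `k`, since every string of length `k` is memoryless for
the order-`k` chain. On strings of length at most `k` the two processes have the same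
probabilities, and the conditional law of `P^{[k]}` given a longer past is that of `P` given its
last `k` symbols. Hence a string of length `< k` that is memoryless for `P` is memoryless for
`P^{[k]}`, so a proper suffix of a node of `τ_{P^{[k]}}` can be memoryless for neither.
-/

section

variable {A : Type*}

lemma iterate_shift_apply (m : ℕ) (x : ℤ → A) (i : ℤ) : shift^[m] x i = x (i + m) := by
  induction m generalizing x with
  | zero => simp
  | succ n ih =>
    rw [Function.iterate_succ_apply, ih]
    simp only [shift]
    congr 1
    push_cast
    ring

lemma cylSet_append_subset (u s : List A) :
    cylSet (u ++ s) ⊆ shift^[u.length] ⁻¹' cylSet s := by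
  intro x hx j
  have hx' := hx ⟨u.length + j.1, by simp⟩
  simp only [iterate_shift_apply]
  rw [show ((j.1 + 1 : ℕ) : ℤ) + (u.length : ℕ) = ((u.length + j.1 + 1 : ℕ) : ℤ) by
    push_cast; ring, hx']
  simp [List.getElem_append_right]

variable [MeasurableSpace A]

lemma measurable_shift : Measurable (shift (A := A)) :=
  measurable_pi_lambda _ fun _ => measurable_pi_apply _

lemma cylP_le_of_suffix {Q : Measure (ℤ → A)} [IsFiniteMeasure Q] (hQ : Q.map shift = Q)
    {s w : List A} (hs : s <:+ w) : cylP Q w ≤ cylP Q s := by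
  obtain ⟨u, rfl⟩ := hs
  have hpres : MeasurePreserving shift^[u.length] Q Q :=
    (MeasurePreserving.mk measurable_shift hQ).iterate u.length
  refine ENNReal.toReal_mono (measure_ne_top _ _) ?_
  calc Q (cylSet (u ++ s)) ≤ Q (shift^[u.length] ⁻¹' cylSet s) :=
        measure_mono (cylSet_append_subset u s)
    _ ≤ Q.map shift^[u.length] (cylSet s) := Measure.le_map_apply hpres.aemeasurable _
    _ = Q (cylSet s) := by rw [hpres.map_eq]

lemma List.drop_append_length_sub {α : Type*} (u s : List α) {k : ℕ} (hs : s.length ≤ k) :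
    (u ++ s).drop ((u ++ s).length - k) = u.drop (u.length + s.length - k) ++ s := by
  rw [List.length_append]
  exact List.drop_append_of_le_length (by omega)

structure IsCanonicalMarkovApprox (P Pk : Measure (ℤ → A)) (k : ℕ) : Prop where
  cylP_eq : ∀ v : List A, v.length ≤ k → cylP Pk v = cylP P v
  condP_eq : ∀ v : List A, k ≤ v.length → 0 < cylP Pk v →
    ∀ a : A, condP Pk a v = condP P a (v.drop (v.length - k))

namespace IsCanonicalMarkovApprox

variable {P Pk : Measure (ℤ → A)} {k : ℕ}

lemma condP_eq_condP_drop (h : IsCanonicalMarkovApprox P Pk k) {w : List A}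
    (hw : 0 < cylP Pk w) (a : A) : condP Pk a w = condP P a (w.drop (w.length - k)) := by
  by_cases hk : k ≤ w.length
  · exact h.condP_eq w hk hw a
  · rw [show w.length - k = 0 by omega, List.drop_zero, condP, condP,
      h.cylP_eq _ (by simp; omega), h.cylP_eq _ (by omega)]

lemma condP_append_eq (h : IsCanonicalMarkovApprox P Pk k) {u s : List A}
    (hs : s.length ≤ k) (hpos : 0 < cylP Pk (u ++ s)) (a : A) :
    condP Pk a (u ++ s) = condP P a (u.drop (u.length + s.length - k) ++ s) := by
  rw [h.condP_eq_condP_drop hpos, List.drop_append_length_sub u s hs]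

lemma condP_eq_of_length_le (h : IsCanonicalMarkovApprox P Pk k) {s : List A}
    (hs : s.length ≤ k) (hpos : 0 < cylP Pk s) (a : A) : condP Pk a s = condP P a s := by
  simpa using h.condP_append_eq (u := []) hs hpos a

variable [IsFiniteMeasure Pk]

lemma isMemoryless_of_length_eq (h : IsCanonicalMarkovApprox P Pk k)
    (hstat : Pk.map shift = Pk) {s : List A} (hs : s.length = k) : IsMemoryless Pk s := by
  intro u a hpos
  have hs_pos : 0 < cylP Pk s := hpos.trans_le (cylP_le_of_suffix hstat ⟨u, rfl⟩)
  rw [h.condP_append_eq hs.le hpos, h.condP_eq_of_length_le hs.le hs_pos,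
    show u.length + s.length - k = u.length by omega, List.drop_length, List.nil_append]

lemma isMemoryless_of_isMemoryless (h : IsCanonicalMarkovApprox P Pk k)
    (hstat : Pk.map shift = Pk) {s : List A} (hs : s.length ≤ k) (hmem : IsMemoryless P s) :
    IsMemoryless Pk s := by
  intro u a hpos
  set t := u.drop (u.length + s.length - k) ++ s
  have ht_suffix : t <:+ u ++ s := by
    rw [show t = _ from (List.drop_append_length_sub u s hs).symm]
    exact List.drop_suffix _ _
  have ht_pos : 0 < cylP P t := by
    rw [← h.cylP_eq t (by simp [t]; omega)]
    exact hpos.trans_le (cylP_le_of_suffix hstat ht_suffix)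
  have hs_pos : 0 < cylP Pk s := hpos.trans_le (cylP_le_of_suffix hstat ⟨u, rfl⟩)
  rw [h.condP_append_eq hs hpos, hmem _ a ht_pos, h.condP_eq_of_length_le hs hs_pos]

lemma length_le_of_isNode (h : IsCanonicalMarkovApprox P Pk k) (hstat : Pk.map shift = Pk)
    {v : List A} (hv : IsNode Pk v) : v.length ≤ k := by
  by_contra! hlt
  have hlen : (v.drop (v.length - k)).length = k := by simp; omega
  refine hv.2 _ (List.drop_suffix _ _) (fun heq => ?_) (h.isMemoryless_of_length_eq hstat hlen)
  rw [heq] at hlen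
  omega

lemma isNode (h : IsCanonicalMarkovApprox P Pk k) (hstat : Pk.map shift = Pk) {v : List A}
    (hv : IsNode Pk v) : IsNode P v := by
  have hlen := h.length_le_of_isNode hstat hv
  refine ⟨h.cylP_eq v hlen ▸ hv.1, fun s hs hne hmem => hv.2 s hs hne ?_⟩
  exact h.isMemoryless_of_isMemoryless hstat (hs.length_le.trans hlen) hmem

end IsCanonicalMarkovApprox

end

theorem markov_approximation_tree_le_general {A : Type*} [MeasurableSpace A]
    (P Pk : Measure (ℤ → A)) (k : ℕ)
    (hPkprob : IsProbabilityMeasure Pk) (hPkstat : Pk.map shift = Pk)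
    (hmarg : ∀ v : List A, v.length ≤ k → cylP Pk v = cylP P v)
    (hmarkov : ∀ v : List A, k ≤ v.length → 0 < cylP Pk v →
      ∀ a : A, condP Pk a v = condP P a (v.drop (v.length - k))) :
    ∀ v : List A, IsNode Pk v → IsNode P v :=
  haveI := hPkprob
  fun _ => (IsCanonicalMarkovApprox.mk hmarg hmarkov).isNode hPkstat

/-- The context tree of the `k`-step canonical Markov approximation `P^{[k]}` of a
stationary process `P` (the stationary `k`-step Markov chain with the marginals of `P` up
to length `k` and transitions `P^{[k]}(a|a_{−k}^{−1}) = P(a|a_{−k}^{−1})`) is dominated by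
the context tree of `P`: every node of `τ_{P^{[k]}}` is a node of `τ_P`. -/
theorem markov_approximation_tree_le {A : Type*} [Fintype A] [MeasurableSpace A]
    (P Pk : Measure (ℤ → A)) (k : ℕ)
    (hPprob : IsProbabilityMeasure P) (hPstat : P.map shift = P)
    (hPkprob : IsProbabilityMeasure Pk) (hPkstat : Pk.map shift = Pk)
    (hmarg : ∀ v : List A, v.length ≤ k → cylP Pk v = cylP P v)
    (hmarkov : ∀ v : List A, k ≤ v.length → 0 < cylP Pk v →
      ∀ a : A, condP Pk a v = condP P a (v.drop (v.length - k))) :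
    ∀ v : List A, IsNode Pk v → IsNode P v :=
  markov_approximation_tree_le_general P Pk k hPkprob hPkstat hmarg hmarkov
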